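/- arXiv:1211.1474 — 11 statements merged into one kernel-verified Lean document; each statement's English description precedes it below -/
import Mathlib

section
/- Let Ω ⊆ ℝ^m be an open set, let u, v ∈ C²(Ω) be real-valued and let F ∈ C¹(Ω, ℝ^m). Let p ∈ Ω be a point with ∇u(p) + F(p) ≠ 0 and ∇v(p) + F(p) ≠ 0. Suppose that N_F(u)(p) = N_F(v)(p) and that the total derivatives of the maps N_F(u) and N_F(v) (defined on a neighborhood of p) coincide at p. If the skew-symmetric matrix (h_{IJ}(p)) has rank at least 3, then ∇u(p) = ∇v(p). -/
/-- Partial derivative `∂_I f` at `p` of a scalar function on `ℝ^m`. -/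
noncomputable def pd {m : ℕ} (f : EuclideanSpace ℝ (Fin m) → ℝ)
    (p : EuclideanSpace ℝ (Fin m)) (I : Fin m) : ℝ :=
  fderiv ℝ f p (EuclideanSpace.single I 1)

/-- `h_{IJ} := ∂_I F_J − ∂_J F_I` for a vector field `F` on `ℝ^m`. -/
noncomputable def hmat {m : ℕ} (F : EuclideanSpace ℝ (Fin m) → EuclideanSpace ℝ (Fin m))
    (p : EuclideanSpace ℝ (Fin m)) (I J : Fin m) : ℝ :=
  pd (fun x => F x J) p I - pd (fun x => F x I) p J

/-!
Write `A = ∇u + F`, `B = ∇v + F`, `r = ‖A p‖`, `s = ‖B p‖`. The derivative of `A / ‖A‖` at `p`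
is `r⁻¹` times the component of `DA(p) = ∇²u(p) + DF(p)` orthogonal to the common unit normal `ν`,
and `∇²u(p)` is symmetric. Antisymmetrising the equality of the two derivatives of the normals
therefore leaves `(r⁻¹ - s⁻¹) h(x, y) = φ(x) ⟪ν, y⟫ - φ(y) ⟪ν, x⟫` for some `φ`, and the right-hand
side has rank at most `2`. As `rank h(p) ≥ 3`, we get `r = s`, hence `A p = r ν = B p`.
-/

open scoped RealInnerProductSpace

section InnerProductSpace

variable {E : Type*} [NormedAddCommGroup E] [InnerProductSpace ℝ E]

theorem ContDiffAt.exists_hasFDerivAt_gradient_symm [CompleteSpace E] {u : E → ℝ} {p : E}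
    (hu : ContDiffAt ℝ 2 u p) :
    ∃ G : E →L[ℝ] E, HasFDerivAt (gradient u) G p ∧ ∀ h y, ⟪G h, y⟫ = ⟪G y, h⟫ := by
  -- over `ℝ` the conjugate-linear Riesz map is linear
  let riesz : StrongDual ℝ E →L[ℝ] E :=
    ((InnerProductSpace.toDual ℝ E).symm : StrongDual ℝ E →SL[starRingEnd ℝ] E)
  have hu' : DifferentiableAt ℝ (fderiv ℝ u) p :=
    (hu.fderiv_right (m := 1) le_rfl).differentiableAt one_ne_zero
  refine ⟨riesz.comp (fderiv ℝ (fderiv ℝ u) p), riesz.hasFDerivAt.comp p hu'.hasFDerivAt,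
    fun h y => ?_⟩
  have hsymm := hu.isSymmSndFDerivAt (by simp [minSmoothness_of_isRCLikeNormedField])
  simpa [riesz, InnerProductSpace.toDual_symm_apply] using hsymm h y

theorem HasFDerivAt.norm {A : E → E} {A' : E →L[ℝ] E} {p : E}
    (hA : HasFDerivAt A A' p) (ha : A p ≠ 0) :
    HasFDerivAt (fun x => ‖A x‖) (‖A p‖⁻¹ • (innerSL ℝ (A p)).comp A') p := by
  have hsq : ‖A p‖ ^ 2 ≠ 0 := by positivity
  have := (Real.hasDerivAt_sqrt hsq).comp_hasFDerivAt p hA.norm_sq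
  simp only [Function.comp_def, Real.sqrt_sq (norm_nonneg _)] at this
  refine this.congr_fderiv ?_
  ext h
  simp only [one_div, mul_inv_rev, smul_apply, ContinuousLinearMap.comp_apply, coe_innerSL_apply,
    nsmul_eq_mul, Nat.cast_ofNat, smul_eq_mul]
  field_simp

theorem inner_fderiv_inv_norm_smul {A : E → E} {A' : E →L[ℝ] E} {p : E}
    (hA : HasFDerivAt A A' p) (ha : A p ≠ 0) (h y : E) :
    ⟪fderiv ℝ (fun x => ‖A x‖⁻¹ • A x) p h, y⟫
      = ‖A p‖⁻¹ * ⟪A' h, y⟫ - (‖A p‖ ^ 3)⁻¹ * ⟪A p, A' h⟫ * ⟪A p, y⟫ := by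
  have hinv := (hasDerivAt_inv (norm_ne_zero_iff.2 ha)).comp_hasFDerivAt p (hA.norm ha)
  have hderiv : HasFDerivAt (fun x => ‖A x‖⁻¹ • A x) _ p := hinv.fun_smul hA
  rw [hderiv.fderiv]
  simp only [Function.comp_apply, neg_smul, add_apply, smul_apply,
    ContinuousLinearMap.smulRight_apply, neg_apply, ContinuousLinearMap.comp_apply,
    coe_innerSL_apply, smul_eq_mul, inner_add_left, inner_smul_left, inner_neg_left, map_inv₀,
    Real.ringHom_apply]
  field_simp
  ring

theorem exists_skew_eq_wedge_of_fderiv_inv_norm_smul_eq {A B : E → E} {G H K : E →L[ℝ] E}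
    {p : E} (hA : HasFDerivAt A (G + K) p) (hB : HasFDerivAt B (H + K) p)
    (hG : ∀ h y, ⟪G h, y⟫ = ⟪G y, h⟫) (hH : ∀ h y, ⟪H h, y⟫ = ⟪H y, h⟫)
    (ha : A p ≠ 0) (hb : B p ≠ 0) (hN : ‖A p‖⁻¹ • A p = ‖B p‖⁻¹ • B p)
    (hDN : fderiv ℝ (fun x => ‖A x‖⁻¹ • A x) p = fderiv ℝ (fun x => ‖B x‖⁻¹ • B x) p) :
    ∃ φ : E → ℝ, ∀ h y, (‖A p‖⁻¹ - ‖B p‖⁻¹) * (⟪K h, y⟫ - ⟪K y, h⟫)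
      = φ h * ⟪A p, y⟫ - φ y * ⟪A p, h⟫ := by
  have hAN := inner_fderiv_inv_norm_smul hA ha
  have hBN := inner_fderiv_inv_norm_smul hB hb
  set r := ‖A p‖
  set s := ‖B p‖
  have hr : r ≠ 0 := norm_ne_zero_iff.2 ha
  have hs : s ≠ 0 := norm_ne_zero_iff.2 hb
  have hBA : ∀ z, ⟪B p, z⟫ = s * r⁻¹ * ⟪A p, z⟫ := by
    have : B p = (s * r⁻¹) • A p := by
      rw [mul_smul, hN, smul_smul, mul_inv_cancel₀ hs, one_smul]
    intro z
    rw [this, real_inner_smul_left]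
  refine ⟨fun h => (r ^ 3)⁻¹ * ⟪A p, (G + K) h⟫ - (r ^ 2 * s)⁻¹ * ⟪A p, (H + K) h⟫,
    fun h y => ?_⟩
  have hAhy := hAN h y
  have hAyh := hAN y h
  have hBhy := hBN h y
  have hByh := hBN y h
  rw [hDN] at hAhy hAyh
  rw [hBA, hBA] at hBhy hByh
  simp only [add_apply, inner_add_left, inner_add_right] at hAhy hAyh hBhy hByh ⊢
  linear_combination (norm := skip) hBhy - hByh - hAhy + hAyh - r⁻¹ * hG h y + s⁻¹ * hH h y
  field_simp
  ring

end InnerProductSpace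

theorem Matrix.rank_vecMulVec_sub_vecMulVec_le {ι R : Type*} [Fintype ι] [CommRing R]
    [StrongRankCondition R] (w x : ι → R) :
    (vecMulVec w x - vecMulVec x w).rank ≤ 2 := by
  have hfactor : vecMulVec w x - vecMulVec x w
      = (of fun i k => ![w i, -x i] k) * of fun k j => ![x j, w j] k := by
    ext i j
    simp [mul_apply, vecMulVec_apply, Fin.sum_univ_two, sub_eq_add_neg]
  rw [hfactor]
  exact (rank_mul_le_left _ _).trans ((rank_le_card_width _).trans (by simp))

theorem hmat_eq_fderiv_apply {m : ℕ} {F : EuclideanSpace ℝ (Fin m) → EuclideanSpace ℝ (Fin m)}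
    {p : EuclideanSpace ℝ (Fin m)} (hF : DifferentiableAt ℝ F p) (I J : Fin m) :
    hmat F p I J = fderiv ℝ F p (EuclideanSpace.single I 1) J
      - fderiv ℝ F p (EuclideanSpace.single J 1) I := by
  have hcoord : ∀ K, fderiv ℝ (fun x => F x K) p = (EuclideanSpace.proj K).comp (fderiv ℝ F p) :=
    fun K => ((EuclideanSpace.proj (𝕜 := ℝ) K).hasFDerivAt.comp p hF.hasFDerivAt).fderiv
  simp [hmat, pd, hcoord]

theorem rank_hmat_le_two_of_skew_eq_wedge {m : ℕ}
    {F : EuclideanSpace ℝ (Fin m) → EuclideanSpace ℝ (Fin m)} {p : EuclideanSpace ℝ (Fin m)}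
    (hF : DifferentiableAt ℝ F p) {c : ℝ} (hc : c ≠ 0) (a : EuclideanSpace ℝ (Fin m))
    (φ : EuclideanSpace ℝ (Fin m) → ℝ)
    (hφ : ∀ h y, c * (⟪fderiv ℝ F p h, y⟫ - ⟪fderiv ℝ F p y, h⟫) = φ h * ⟪a, y⟫ - φ y * ⟪a, h⟫) :
    (Matrix.of fun I J => hmat F p I J).rank ≤ 2 := by
  let w : Fin m → ℝ := fun I => c⁻¹ * φ (EuclideanSpace.single I 1)
  have hwedge : (Matrix.of fun I J => hmat F p I J)
      = Matrix.vecMulVec w a - Matrix.vecMulVec a w := by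
    ext I J
    have := hφ (EuclideanSpace.single I 1) (EuclideanSpace.single J 1)
    simp only [EuclideanSpace.inner_single_right, one_mul, conj_trivial] at this
    simp only [Matrix.of_apply, hmat_eq_fderiv_apply hF, Matrix.sub_apply,
      Matrix.vecMulVec_apply, w]
    field_simp
    linear_combination this
  exact hwedge ▸ Matrix.rank_vecMulVec_sub_vecMulVec_le w a

/-- If `u, v ∈ C²(Ω)`, `F ∈ C¹(Ω, ℝ^m)`, `p ∈ Ω` is nonsingular for both `u` and `v`,
the horizontal normals `N_F(u)`, `N_F(v)` agree at `p`, their total derivatives agree at `p`,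
and `rank (h_{IJ}(p)) ≥ 3`, then `∇u(p) = ∇v(p)`. -/
theorem stmt_0 {m : ℕ} (Ω : Set (EuclideanSpace ℝ (Fin m))) (hΩ : IsOpen Ω)
    (u v : EuclideanSpace ℝ (Fin m) → ℝ)
    (F : EuclideanSpace ℝ (Fin m) → EuclideanSpace ℝ (Fin m))
    (hu : ContDiffOn ℝ 2 u Ω) (hv : ContDiffOn ℝ 2 v Ω) (hF : ContDiffOn ℝ 1 F Ω)
    (p : EuclideanSpace ℝ (Fin m)) (hp : p ∈ Ω)
    (hup : gradient u p + F p ≠ 0) (hvp : gradient v p + F p ≠ 0)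
    (hN : ‖gradient u p + F p‖⁻¹ • (gradient u p + F p)
        = ‖gradient v p + F p‖⁻¹ • (gradient v p + F p))
    (hDN : fderiv ℝ (fun x => ‖gradient u x + F x‖⁻¹ • (gradient u x + F x)) p
         = fderiv ℝ (fun x => ‖gradient v x + F x‖⁻¹ • (gradient v x + F x)) p)
    (hrank : 3 ≤ (Matrix.of fun I J => hmat F p I J).rank) :
    gradient u p = gradient v p := by
  have hpΩ := hΩ.mem_nhds hp
  obtain ⟨Gu, hGu, hGu_symm⟩ := (hu.contDiffAt hpΩ).exists_hasFDerivAt_gradient_symm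
  obtain ⟨Gv, hGv, hGv_symm⟩ := (hv.contDiffAt hpΩ).exists_hasFDerivAt_gradient_symm
  have hFp : DifferentiableAt ℝ F p := (hF.contDiffAt hpΩ).differentiableAt one_ne_zero
  have hA : HasFDerivAt (fun x => gradient u x + F x) (Gu + fderiv ℝ F p) p :=
    hGu.add hFp.hasFDerivAt
  have hB : HasFDerivAt (fun x => gradient v x + F x) (Gv + fderiv ℝ F p) p :=
    hGv.add hFp.hasFDerivAt
  have hnorm : ‖gradient u p + F p‖ = ‖gradient v p + F p‖ := by
    by_contra hne
    obtain ⟨φ, hφ⟩ := exists_skew_eq_wedge_of_fderiv_inv_norm_smul_eq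
      hA hB hGu_symm hGv_symm hup hvp hN hDN
    have hc : ‖gradient u p + F p‖⁻¹ - ‖gradient v p + F p‖⁻¹ ≠ 0 :=
      sub_ne_zero.2 (inv_injective.ne hne)
    have := rank_hmat_le_two_of_skew_eq_wedge hFp hc _ φ hφ
    omega
  rw [hnorm] at hN
  exact add_right_cancel (smul_right_injective _ (inv_ne_zero (norm_ne_zero_iff.2 hvp)) hN)
end

section
/- Let Ω ⊆ ℝ^m be an open set, let u, v ∈ C²(Ω) be real-valued and let F ∈ C¹(Ω, ℝ^m). Suppose N_F(u) = N_F(v) at every point of Ω \ (S_F(u) ∪ S_F(v)). Suppose moreover that at each point p of Ω \ (S_F(u) ∪ S_F(v)), either Θ_u is nonintegrable at p or Θ_v is nonintegrable at p; here Θ_w is nonintegrable at p means that there exist indices I, J, K ∈ {1,…,m} such that (∂_K w + F_K) h_{IJ} + (∂_I w + F_I) h_{JK} + (∂_J w + F_J) h_{KI} ≠ 0 at p (equivalently Θ_w ∧ dΘ_w ≠ 0 at p). Then ∇u = ∇v at every point of Ω \ (S_F(u) ∪ S_F(v)). -/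
/-- `Θ_w` is nonintegrable at `p`: some component of `Θ_w ∧ dΘ_w` is nonzero at `p`. -/
noncomputable def NonIntegrableAt {m : ℕ} (w : EuclideanSpace ℝ (Fin m) → ℝ)
    (F : EuclideanSpace ℝ (Fin m) → EuclideanSpace ℝ (Fin m))
    (p : EuclideanSpace ℝ (Fin m)) : Prop :=
  ∃ I J K : Fin m,
    (pd w p K + F p K) * hmat F p I J + (pd w p I + F p I) * hmat F p J K
      + (pd w p J + F p J) * hmat F p K I ≠ 0

open Filter Topology

lemma ContDiffAt.differentiableAt_gradient {E : Type*} [NormedAddCommGroup E]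
    [InnerProductSpace ℝ E] [CompleteSpace E] {w : E → ℝ} {p : E} (hw : ContDiffAt ℝ 2 w p) :
    DifferentiableAt ℝ (gradient w) p :=
  (InnerProductSpace.toDual ℝ E).symm.differentiable.differentiableAt.comp p
    ((hw.fderiv_right le_rfl).differentiableAt one_ne_zero)

lemma eq_norm_div_norm_smul_of_inv_norm_smul_eq {E : Type*} [NormedAddCommGroup E]
    [NormedSpace ℝ E] {a b : E} (ha : a ≠ 0) (h : ‖a‖⁻¹ • a = ‖b‖⁻¹ • b) :
    a = (‖a‖ / ‖b‖) • b := by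
  rw [div_eq_mul_inv, mul_smul, ← h, smul_inv_smul₀ (norm_ne_zero_iff.2 ha)]

section
variable {m : ℕ}

lemma pd_eq_gradient_apply (f : EuclideanSpace ℝ (Fin m) → ℝ)
    (p : EuclideanSpace ℝ (Fin m)) (I : Fin m) : pd f p I = gradient f p I := by
  rw [pd, ← InnerProductSpace.toDual_symm_apply (𝕜 := ℝ), EuclideanSpace.inner_single_right]
  simp [gradient]

lemma hmat_congr_of_eventuallyEq {F G : EuclideanSpace ℝ (Fin m) → EuclideanSpace ℝ (Fin m)}
    {p : EuclideanSpace ℝ (Fin m)} (h : F =ᶠ[𝓝 p] G) : hmat F p = hmat G p := by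
  have hpd : ∀ J, pd (fun x => F x J) p = pd (fun x => G x J) p := fun J => by
    have hJ : (fun x => F x J) =ᶠ[𝓝 p] fun x => G x J := h.mono fun x hx => congrArg (· J) hx
    ext I
    rw [pd, pd, hJ.fderiv_eq]
  ext I J
  rw [hmat, hmat, hpd, hpd]

lemma hmat_add {F G : EuclideanSpace ℝ (Fin m) → EuclideanSpace ℝ (Fin m)}
    {p : EuclideanSpace ℝ (Fin m)} (hF : DifferentiableAt ℝ F p) (hG : DifferentiableAt ℝ G p)
    (I J : Fin m) : hmat (fun x => F x + G x) p I J = hmat F p I J + hmat G p I J := by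
  have hpd : ∀ K, pd (fun x => F x K + G x K) p
      = fun L => pd (fun x => F x K) p L + pd (fun x => G x K) p L := fun K => by
    ext L
    rw [pd, fderiv_fun_add (differentiableAt_euclidean.1 hF K)
      (differentiableAt_euclidean.1 hG K)]
    rfl
  simp only [hmat, PiLp.add_apply, hpd]
  ring

lemma hmat_smul {c : EuclideanSpace ℝ (Fin m) → ℝ}
    {F : EuclideanSpace ℝ (Fin m) → EuclideanSpace ℝ (Fin m)}
    {p : EuclideanSpace ℝ (Fin m)} (hc : DifferentiableAt ℝ c p) (hF : DifferentiableAt ℝ F p)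
    (I J : Fin m) :
    hmat (fun x => c x • F x) p I J
      = c p * hmat F p I J + pd c p I * F p J - pd c p J * F p I := by
  have hpd : ∀ K, pd (fun x => c x * F x K) p
      = fun L => c p * pd (fun x => F x K) p L + F p K * pd c p L := fun K => by
    ext L
    rw [pd, fderiv_fun_mul hc (differentiableAt_euclidean.1 hF K)]
    rfl
  simp only [hmat, PiLp.smul_apply, smul_eq_mul, hpd]
  ring

lemma hmat_gradient {w : EuclideanSpace ℝ (Fin m) → ℝ} {p : EuclideanSpace ℝ (Fin m)}
    (hw : ContDiffAt ℝ 2 w p) (I J : Fin m) : hmat (gradient w) p I J = 0 := by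
  have hD : DifferentiableAt ℝ (fderiv ℝ w) p :=
    (hw.fderiv_right le_rfl).differentiableAt one_ne_zero
  have hpd : ∀ K L, pd (fun x => gradient w x K) p L
      = fderiv ℝ (fderiv ℝ w) p (EuclideanSpace.single L 1) (EuclideanSpace.single K 1) :=
    fun K L => by
      simp only [← pd_eq_gradient_apply, pd]
      rw [fderiv_clm_apply hD (differentiableAt_const _)]
      simp
  rw [hmat, hpd, hpd, (hw.isSymmSndFDerivAt (by simp)).eq, sub_self]

lemma eq_one_of_hmat_smul_eq_hmat {c : EuclideanSpace ℝ (Fin m) → ℝ}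
    {B : EuclideanSpace ℝ (Fin m) → EuclideanSpace ℝ (Fin m)} {p : EuclideanSpace ℝ (Fin m)}
    (hc : DifferentiableAt ℝ c p) (hB : DifferentiableAt ℝ B p)
    (h : ∀ I J, hmat (fun x => c x • B x) p I J = hmat B p I J)
    (hT : ∃ I J K, B p K * hmat B p I J + B p I * hmat B p J K + B p J * hmat B p K I ≠ 0) :
    c p = 1 := by
  obtain ⟨I, J, K, hT⟩ := hT
  have hwedge : ∀ I J, (c p - 1) * hmat B p I J = pd c p J * B p I - pd c p I * B p J :=
    fun I J => by linarith [h I J, hmat_smul hc hB I J]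
  have hmul : (c p - 1) * (B p K * hmat B p I J + B p I * hmat B p J K
      + B p J * hmat B p K I) = 0 := by
    linear_combination B p K * hwedge I J + B p I * hwedge J K + B p J * hwedge K I
  exact sub_eq_zero.1 ((mul_eq_zero.1 hmul).resolve_right hT)

lemma hmat_gradient_add {w : EuclideanSpace ℝ (Fin m) → ℝ}
    {F : EuclideanSpace ℝ (Fin m) → EuclideanSpace ℝ (Fin m)} {p : EuclideanSpace ℝ (Fin m)}
    (hw : ContDiffAt ℝ 2 w p) (hF : DifferentiableAt ℝ F p) :
    hmat (fun x => gradient w x + F x) p = hmat F p := by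
  ext I J
  rw [hmat_add hw.differentiableAt_gradient hF, hmat_gradient hw, zero_add]

lemma gradient_eq_of_nonIntegrableAt {u v : EuclideanSpace ℝ (Fin m) → ℝ}
    {F : EuclideanSpace ℝ (Fin m) → EuclideanSpace ℝ (Fin m)} {p : EuclideanSpace ℝ (Fin m)}
    (hu : ContDiffAt ℝ 2 u p) (hv : ContDiffAt ℝ 2 v p) (hF : DifferentiableAt ℝ F p)
    (hN : ∀ᶠ x in 𝓝 p, gradient u x + F x ≠ 0 → gradient v x + F x ≠ 0 →
      ‖gradient u x + F x‖⁻¹ • (gradient u x + F x)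
        = ‖gradient v x + F x‖⁻¹ • (gradient v x + F x))
    (hA : gradient u p + F p ≠ 0) (hB : gradient v p + F p ≠ 0)
    (hni : NonIntegrableAt v F p) : gradient u p = gradient v p := by
  set A := fun x => gradient u x + F x
  set B := fun x => gradient v x + F x with hBdef
  have hAd : DifferentiableAt ℝ A p := hu.differentiableAt_gradient.add hF
  have hBd : DifferentiableAt ℝ B p := hv.differentiableAt_gradient.add hF
  have hc : DifferentiableAt ℝ (fun x => ‖A x‖ / ‖B x‖) p := by
    simpa only [div_eq_mul_inv] using
      (hAd.norm ℝ hA).fun_mul ((hBd.norm ℝ hB).fun_inv (norm_ne_zero_iff.2 hB))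
  have hAB : A =ᶠ[𝓝 p] fun x => (‖A x‖ / ‖B x‖) • B x := by
    filter_upwards [hN, hAd.continuousAt.eventually_ne hA, hBd.continuousAt.eventually_ne hB]
      with x hx hAx hBx
    exact eq_norm_div_norm_smul_of_inv_norm_smul_eq hAx (hx hAx hBx)
  have hmatB : hmat B p = hmat F p := hmat_gradient_add hv hF
  have hc1 : ‖A p‖ / ‖B p‖ = 1 := by
    refine eq_one_of_hmat_smul_eq_hmat hc hBd (fun I J => ?_) ?_
    · rw [← hmat_congr_of_eventuallyEq hAB, hmat_gradient_add hu hF, hmatB]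
    · simpa only [NonIntegrableAt, hBdef, hmat_gradient_add hv hF, PiLp.add_apply,
        pd_eq_gradient_apply] using hni
  have hApB : A p = B p := by rw [hAB.eq_of_nhds, hc1, one_smul]
  exact add_right_cancel hApB

end

/-- Theorem B: if `N_F(u) = N_F(v)` on the nonsingular set and at each nonsingular point
either `Θ_u` or `Θ_v` is nonintegrable, then `∇u = ∇v` on the nonsingular set. -/
theorem stmt_1 {m : ℕ} (Ω : Set (EuclideanSpace ℝ (Fin m))) (hΩ : IsOpen Ω)
    (u v : EuclideanSpace ℝ (Fin m) → ℝ)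
    (F : EuclideanSpace ℝ (Fin m) → EuclideanSpace ℝ (Fin m))
    (hu : ContDiffOn ℝ 2 u Ω) (hv : ContDiffOn ℝ 2 v Ω) (hF : ContDiffOn ℝ 1 F Ω)
    (hN : ∀ p ∈ Ω, gradient u p + F p ≠ 0 → gradient v p + F p ≠ 0 →
      ‖gradient u p + F p‖⁻¹ • (gradient u p + F p)
        = ‖gradient v p + F p‖⁻¹ • (gradient v p + F p))
    (hnonint : ∀ p ∈ Ω, gradient u p + F p ≠ 0 → gradient v p + F p ≠ 0 →
      NonIntegrableAt u F p ∨ NonIntegrableAt v F p) :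
    ∀ p ∈ Ω, gradient u p + F p ≠ 0 → gradient v p + F p ≠ 0 →
      gradient u p = gradient v p := by
  intro p hp hA hB
  have hΩp : Ω ∈ 𝓝 p := hΩ.mem_nhds hp
  have hup := hu.contDiffAt hΩp
  have hvp := hv.contDiffAt hΩp
  have hFp := (hF.contDiffAt hΩp).differentiableAt one_ne_zero
  rcases hnonint p hp hA hB with hni | hni
  · refine (gradient_eq_of_nonIntegrableAt hvp hup hFp ?_ hB hA hni).symm
    filter_upwards [hΩp] with x hx hBx hAx using (hN x hx hAx hBx).symm
  · refine gradient_eq_of_nonIntegrableAt hup hvp hFp ?_ hA hB hni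
    filter_upwards [hΩp] with x hx using hN x hx
end

section
/- Let B be an open ball in ℝ^m, m ≥ 2. Let D : B → ℝ, ν = (ν_1, …, ν_m) : B → ℝ^m and F = (F_1, …, F_m) : B → ℝ^m be C^∞ smooth, with D > 0 on B and |ν(x)| = 1 (Euclidean norm) for every x ∈ B. Suppose that on all of B (summation over the repeated index K): (i) for all I, J: (∂_I ν_J − ν_I ν_K ∂_K ν_J) − (∂_J ν_I − ν_J ν_K ∂_K ν_I) = (1/D)(h_{IJ} − ν_J ν_K h_{IK} − ν_I ν_K h_{KJ}); and (ii) for all K: ∂_K D − ν_K ν_J ∂_J D = ν_J (∂_J ν_K) D − ν_J h_{JK}. Then there exists a C^∞ smooth function u : B → ℝ such that ∂_I u = D ν_I − F_I on B for every I, i.e., ν = (∇u + F)/D. -/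
theorem Convex.exists_contDiffOn_hasGradientAt_of_isSymmetric {E : Type*} [NormedAddCommGroup E]
    [InnerProductSpace ℝ E] [CompleteSpace E] {s : Set E} (hs : Convex ℝ s) (hso : IsOpen s)
    {n : ℕ∞} (hn : n ≠ 0) {g : E → E} (hg : ContDiffOn ℝ n g s)
    (hsymm : ∀ x ∈ s, (fderiv ℝ g x : E →ₗ[ℝ] E).IsSymmetric) :
    ∃ u : E → ℝ, ContDiffOn ℝ (n + 1) u s ∧ ∀ x ∈ s, HasGradientAt u (g x) x := by
  set ω : E → E →L[ℝ] ℝ := fun x => innerSL ℝ (g x)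
  have hω : ContDiffOn ℝ n ω s := (innerSL ℝ : E →L[ℝ] E →L[ℝ] ℝ).contDiff.comp_contDiffOn hg
  have hω_closed : ∀ x ∈ s, ∀ v w, fderiv ℝ ω x v w = fderiv ℝ ω x w v := by
    intro x hx v w
    have hgx : DifferentiableAt ℝ g x :=
      (hg.differentiableOn (by exact_mod_cast hn)).differentiableAt (hso.mem_nhds hx)
    have hdω : fderiv ℝ ω x = (innerSL ℝ : E →L[ℝ] E →L[ℝ] ℝ).comp (fderiv ℝ g x) :=
      ((innerSL ℝ : E →L[ℝ] E →L[ℝ] ℝ).hasFDerivAt.comp x hgx.hasFDerivAt).fderiv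
    simpa [hdω, real_inner_comm] using hsymm x hx v w
  obtain ⟨u, hu⟩ := hs.exists_forall_hasFDerivAt_of_fderiv_symmetric hso
    (hω.differentiableOn (by exact_mod_cast hn)) hω_closed
  refine ⟨u, ?_, hu⟩
  rw [contDiffOn_succ_iff_fderiv_of_isOpen hso]
  exact ⟨fun x hx => (hu x hx).differentiableAt.differentiableWithinAt, by simp,
    hω.congr fun x hx => (hu x hx).fderiv⟩

theorem LinearMap.isSymmetric_of_apply_single_comm {ι : Type*} [Fintype ι] [DecidableEq ι]
    (A : EuclideanSpace ℝ ι →ₗ[ℝ] EuclideanSpace ℝ ι)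
    (h : ∀ i j, A (EuclideanSpace.single i 1) j = A (EuclideanSpace.single j 1) i) :
    A.IsSymmetric := by
  rw [← LinearMap.isHermitian_toMatrix_iff (EuclideanSpace.basisFun ι ℝ)]
  ext i j
  simp [LinearMap.toMatrix_apply, h]

theorem curl_smul_eq_of_integrability {ι : Type*} [Fintype ι] {D : ℝ} (hD : D ≠ 0)
    (ν d : ι → ℝ) (a h : ι → ι → ℝ) (hh : ∀ I J, h I J = -h J I)
    (h1 : ∀ I J, (a I J - ν I * ∑ K, ν K * a K J) - (a J I - ν J * ∑ K, ν K * a K I)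
      = (1 / D) * (h I J - ν J * ∑ K, ν K * h I K - ν I * ∑ K, ν K * h K J))
    (h2 : ∀ K, d K - ν K * ∑ J, ν J * d J = (∑ J, ν J * a J K) * D - ∑ J, ν J * h J K)
    (I J : ι) :
    D * (a I J - a J I) + (d I * ν J - d J * ν I) = h I J := by
  have h1D := h1 I J
  field_simp at h1D
  have hswap : ∑ K, ν K * h I K = -∑ K, ν K * h K I := by
    rw [← Finset.sum_neg_distrib]
    exact Finset.sum_congr rfl fun K _ => by rw [hh I K]; ring
  rw [hswap] at h1D
  linear_combination h1D + ν J * h2 I - ν I * h2 J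

section PartialDerivatives

variable {m : ℕ} {x : EuclideanSpace ℝ (Fin m)}

theorem hmat_antisymm (F : EuclideanSpace ℝ (Fin m) → EuclideanSpace ℝ (Fin m)) (I J : Fin m) :
    hmat F x I J = -hmat F x J I := by
  simp only [hmat]; ring

theorem pd_apply_eq_fderiv {f : EuclideanSpace ℝ (Fin m) → EuclideanSpace ℝ (Fin m)}
    (hf : DifferentiableAt ℝ f x) (I J : Fin m) :
    pd (fun y => f y J) x I = fderiv ℝ f x (EuclideanSpace.single I 1) J := by
  have h : HasFDerivAt (fun y => f y J) ((EuclideanSpace.proj J).comp (fderiv ℝ f x)) x :=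
    (EuclideanSpace.proj (𝕜 := ℝ) J).hasFDerivAt.comp x hf.hasFDerivAt
  rw [pd, h.fderiv]
  simp

theorem pd_mul {f g : EuclideanSpace ℝ (Fin m) → ℝ} (hf : DifferentiableAt ℝ f x)
    (hg : DifferentiableAt ℝ g x) (I : Fin m) :
    pd (fun y => f y * g y) x I = f x * pd g x I + pd f x I * g x := by
  simp [pd, fderiv_fun_mul hf hg, mul_comm]

theorem pd_sub {f g : EuclideanSpace ℝ (Fin m) → ℝ} (hf : DifferentiableAt ℝ f x)
    (hg : DifferentiableAt ℝ g x) (I : Fin m) :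
    pd (fun y => f y - g y) x I = pd f x I - pd g x I := by
  simp [pd, fderiv_fun_sub hf hg]

theorem pd_eq_of_hasGradientAt {u : EuclideanSpace ℝ (Fin m) → ℝ}
    {v : EuclideanSpace ℝ (Fin m)} (hu : HasGradientAt u v x) (I : Fin m) : pd u x I = v I := by
  rw [pd, hu.hasFDerivAt.fderiv, InnerProductSpace.toDual_apply_apply, EuclideanSpace.inner_single_right]
  simp

theorem pd_smul_sub_apply {D : EuclideanSpace ℝ (Fin m) → ℝ}
    {ν F : EuclideanSpace ℝ (Fin m) → EuclideanSpace ℝ (Fin m)} (hD : DifferentiableAt ℝ D x)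
    (hν : DifferentiableAt ℝ ν x) (hF : DifferentiableAt ℝ F x) (I J : Fin m) :
    pd (fun y => (D y • ν y - F y) J) x I
      = D x * pd (fun y => ν y J) x I + pd D x I * ν x J - pd (fun y => F y J) x I := by
  have hνJ : DifferentiableAt ℝ (fun y => ν y J) x :=
    (EuclideanSpace.proj (𝕜 := ℝ) J).differentiableAt.comp x hν
  have hFJ : DifferentiableAt ℝ (fun y => F y J) x :=
    (EuclideanSpace.proj (𝕜 := ℝ) J).differentiableAt.comp x hF
  simp only [PiLp.sub_apply, PiLp.smul_apply, smul_eq_mul]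
  rw [pd_sub (f := fun y => D y * ν y J) (hD.mul hνJ) hFJ, pd_mul hD hνJ]

theorem isSymmetric_fderiv_of_pd_comm {f : EuclideanSpace ℝ (Fin m) → EuclideanSpace ℝ (Fin m)}
    (hf : DifferentiableAt ℝ f x) (h : ∀ I J, pd (fun y => f y J) x I = pd (fun y => f y I) x J) :
    (fderiv ℝ f x : EuclideanSpace ℝ (Fin m) →ₗ[ℝ] EuclideanSpace ℝ (Fin m)).IsSymmetric :=
  LinearMap.isSymmetric_of_apply_single_comm _ fun I J => by
    simpa [pd_apply_eq_fderiv hf] using h I J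

end PartialDerivatives

theorem stmt_2_general {m : ℕ} (c : EuclideanSpace ℝ (Fin m)) (r : ℝ)
    (D : EuclideanSpace ℝ (Fin m) → ℝ)
    (ν F : EuclideanSpace ℝ (Fin m) → EuclideanSpace ℝ (Fin m))
    (hD : ContDiffOn ℝ (⊤ : ℕ∞) D (Metric.ball c r))
    (hν : ContDiffOn ℝ (⊤ : ℕ∞) ν (Metric.ball c r))
    (hF : ContDiffOn ℝ (⊤ : ℕ∞) F (Metric.ball c r))
    (hDpos : ∀ x ∈ Metric.ball c r, 0 < D x)
    (h1 : ∀ x ∈ Metric.ball c r, ∀ I J : Fin m,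
      (pd (fun y => ν y J) x I - ν x I * ∑ K, ν x K * pd (fun y => ν y J) x K)
        - (pd (fun y => ν y I) x J - ν x J * ∑ K, ν x K * pd (fun y => ν y I) x K)
      = (1 / D x) * (hmat F x I J - ν x J * ∑ K, ν x K * hmat F x I K
          - ν x I * ∑ K, ν x K * hmat F x K J))
    (h2 : ∀ x ∈ Metric.ball c r, ∀ K : Fin m,
      pd D x K - ν x K * ∑ J, ν x J * pd D x J
      = (∑ J, ν x J * pd (fun y => ν y K) x J) * D x - ∑ J, ν x J * hmat F x J K) :
    ∃ u : EuclideanSpace ℝ (Fin m) → ℝ, ContDiffOn ℝ (⊤ : ℕ∞) u (Metric.ball c r) ∧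
      ∀ x ∈ Metric.ball c r, ∀ I : Fin m, pd u x I = D x * ν x I - F x I := by
  set g := fun x => D x • ν x - F x
  have hg : ContDiffOn ℝ (⊤ : ℕ∞) g (Metric.ball c r) := (hD.smul hν).sub hF
  have hsymm : ∀ x ∈ Metric.ball c r,
      (fderiv ℝ g x : EuclideanSpace ℝ (Fin m) →ₗ[ℝ] EuclideanSpace ℝ (Fin m)).IsSymmetric := by
    intro x hx
    have hB := Metric.isOpen_ball.mem_nhds hx
    have hDx := (hD.contDiffAt hB).differentiableAt (by simp)
    have hνx := (hν.contDiffAt hB).differentiableAt (by simp)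
    have hFx := (hF.contDiffAt hB).differentiableAt (by simp)
    refine isSymmetric_fderiv_of_pd_comm ((hDx.smul hνx).sub hFx) fun I J => ?_
    have hcurl := curl_smul_eq_of_integrability (hDpos x hx).ne' (ν x) (pd D x)
      (fun I J => pd (fun y => ν y J) x I) (hmat F x) (hmat_antisymm F) (h1 x hx) (h2 x hx) I J
    rw [hmat] at hcurl
    rw [pd_smul_sub_apply hDx hνx hFx, pd_smul_sub_apply hDx hνx hFx]
    linarith
  obtain ⟨u, hu, hgrad⟩ := (convex_ball c r).exists_contDiffOn_hasGradientAt_of_isSymmetric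
    Metric.isOpen_ball (by simp) hg hsymm
  refine ⟨u, by simpa using hu, fun x hx I => ?_⟩
  simp [pd_eq_of_hasGradientAt (hgrad x hx), g]

/-- Theorem E (integrability): given smooth `D > 0`, a smooth unit vector field `ν` and a
smooth vector field `F` on an open ball `B ⊆ ℝ^m` (`m ≥ 2`) satisfying the two integrability
conditions (1.1.4) and (1.1.6), there is a smooth `u` on `B` with `∂_I u = D ν_I − F_I`,
i.e. `ν = (∇u + F)/D`. -/
theorem stmt_2 {m : ℕ} (hm : 2 ≤ m) (c : EuclideanSpace ℝ (Fin m)) (r : ℝ) (hr : 0 < r)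
    (D : EuclideanSpace ℝ (Fin m) → ℝ)
    (ν F : EuclideanSpace ℝ (Fin m) → EuclideanSpace ℝ (Fin m))
    (hD : ContDiffOn ℝ (⊤ : ℕ∞) D (Metric.ball c r))
    (hν : ContDiffOn ℝ (⊤ : ℕ∞) ν (Metric.ball c r))
    (hF : ContDiffOn ℝ (⊤ : ℕ∞) F (Metric.ball c r))
    (hDpos : ∀ x ∈ Metric.ball c r, 0 < D x)
    (hunit : ∀ x ∈ Metric.ball c r, ‖ν x‖ = 1)
    (h1 : ∀ x ∈ Metric.ball c r, ∀ I J : Fin m,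
      (pd (fun y => ν y J) x I - ν x I * ∑ K, ν x K * pd (fun y => ν y J) x K)
        - (pd (fun y => ν y I) x J - ν x J * ∑ K, ν x K * pd (fun y => ν y I) x K)
      = (1 / D x) * (hmat F x I J - ν x J * ∑ K, ν x K * hmat F x I K
          - ν x I * ∑ K, ν x K * hmat F x K J))
    (h2 : ∀ x ∈ Metric.ball c r, ∀ K : Fin m,
      pd D x K - ν x K * ∑ J, ν x J * pd D x J
      = (∑ J, ν x J * pd (fun y => ν y K) x J) * D x - ∑ J, ν x J * hmat F x J K) :
    ∃ u : EuclideanSpace ℝ (Fin m) → ℝ, ContDiffOn ℝ (⊤ : ℕ∞) u (Metric.ball c r) ∧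
      ∀ x ∈ Metric.ball c r, ∀ I : Fin m, pd u x I = D x * ν x I - F x I :=
  stmt_2_general c r D ν F hD hν hF hDpos h1 h2
end

section
/- Let h be a skew-symmetric real m×m matrix (m ≥ 2), i.e., h + hᵀ = 0, and let ν be an m×1 real column vector with |ν| = 1. Suppose h − h ν νᵀ − ν νᵀ h = 0. Then the rank of h is 0 or 2. -/
open Matrix

/-!
Writing `P = ν νᵀ` and `a = h ν`, skew-symmetry gives `h P = a νᵀ` and `P h = -ν aᵀ`, so the
hypothesis says `h = a νᵀ - ν aᵀ`. If `a = 0` then `h = 0`. Otherwise `ν ≠ 0`, and `a ⟂ ν` because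
`νᵀ h ν = 0`; then `h ν = |ν|² a` and `h a = -|a|² ν`, so the range of `h` is the plane spanned by
the orthogonal nonzero vectors `a` and `ν`.
-/

section

variable {n K : Type*} [Fintype n]

theorem Matrix.vecMulVec_sub_vecMulVec_mulVec [CommRing K] (a b x : n → K) :
    (vecMulVec a b - vecMulVec b a) *ᵥ x = (b ⬝ᵥ x) • a - (a ⬝ᵥ x) • b := by
  simp only [sub_mulVec, vecMulVec_mulVec, op_smul_eq_smul]

theorem Matrix.dotProduct_mulVec_self_eq_zero_of_transpose_eq_neg [CommRing K]
    [IsAddTorsionFree K] {h : Matrix n n K} (hT : hᵀ = -h) (x : n → K) :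
    x ⬝ᵥ (h *ᵥ x) = 0 := by
  refine self_eq_neg.mp ?_
  calc x ⬝ᵥ (h *ᵥ x) = (hᵀ *ᵥ x) ⬝ᵥ x := by rw [dotProduct_mulVec, mulVec_transpose]
    _ = -(x ⬝ᵥ (h *ᵥ x)) := by rw [hT, neg_mulVec, neg_dotProduct, dotProduct_comm]

theorem Matrix.eq_vecMulVec_sub_vecMulVec_of_transpose_eq_neg [CommRing K] {h : Matrix n n K}
    (hT : hᵀ = -h) {ν : n → K} (heq : h - h * vecMulVec ν ν - vecMulVec ν ν * h = 0) :
    h = vecMulVec (h *ᵥ ν) ν - vecMulVec ν (h *ᵥ ν) := by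
  rw [mul_vecMulVec, vecMulVec_mul, ← mulVec_transpose, hT, neg_mulVec, vecMulVec_neg] at heq
  rw [← sub_eq_zero, ← heq]
  abel

theorem Matrix.linearIndependent_pair_of_dotProduct_eq_zero [Field K] {a b : n → K}
    (hab : a ⬝ᵥ b = 0) (ha : a ⬝ᵥ a ≠ 0) (hb : b ⬝ᵥ b ≠ 0) :
    LinearIndependent K ![a, b] := by
  refine LinearIndependent.pair_iff.mpr fun s t hst => ⟨?_, ?_⟩
  · have := congrArg (· ⬝ᵥ a) hst
    simp only [add_dotProduct, smul_dotProduct, dotProduct_comm b a, hab, smul_eq_mul, mul_zero,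
      add_zero, zero_dotProduct] at this
    exact (mul_eq_zero.mp this).resolve_right ha
  · have := congrArg (· ⬝ᵥ b) hst
    simp only [add_dotProduct, smul_dotProduct, hab, smul_eq_mul, mul_zero, zero_add,
      zero_dotProduct] at this
    exact (mul_eq_zero.mp this).resolve_right hb

theorem Matrix.range_mulVecLin_vecMulVec_sub_vecMulVec [Field K] {a b : n → K}
    (hab : a ⬝ᵥ b = 0) (ha : a ⬝ᵥ a ≠ 0) (hb : b ⬝ᵥ b ≠ 0) :
    LinearMap.range (vecMulVec a b - vecMulVec b a).mulVecLin =
      Submodule.span K (Set.range ![a, b]) := by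
  have ha_mem : a ∈ Set.range ![a, b] := ⟨0, rfl⟩
  have hb_mem : b ∈ Set.range ![a, b] := ⟨1, rfl⟩
  apply le_antisymm
  · rintro _ ⟨x, rfl⟩
    rw [mulVecLin_apply, vecMulVec_sub_vecMulVec_mulVec]
    exact sub_mem (Submodule.smul_mem _ _ (Submodule.subset_span ha_mem))
      (Submodule.smul_mem _ _ (Submodule.subset_span hb_mem))
  · rw [Submodule.span_le, Set.range_subset_iff, Fin.forall_fin_two]
    constructor
    · refine (Submodule.smul_mem_iff _ hb).mp ⟨b, ?_⟩
      rw [mulVecLin_apply, vecMulVec_sub_vecMulVec_mulVec, hab, zero_smul, sub_zero]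
      rfl
    · refine (Submodule.smul_mem_iff _ (neg_ne_zero.mpr ha)).mp ⟨a, ?_⟩
      rw [mulVecLin_apply, vecMulVec_sub_vecMulVec_mulVec, dotProduct_comm b a, hab, zero_smul,
        zero_sub, neg_smul]
      rfl

theorem Matrix.rank_vecMulVec_sub_vecMulVec [Field K] {a b : n → K}
    (hab : a ⬝ᵥ b = 0) (ha : a ⬝ᵥ a ≠ 0) (hb : b ⬝ᵥ b ≠ 0) :
    (vecMulVec a b - vecMulVec b a).rank = 2 := by
  rw [rank, range_mulVecLin_vecMulVec_sub_vecMulVec hab ha hb,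
    finrank_span_eq_card (linearIndependent_pair_of_dotProduct_eq_zero hab ha hb),
    Fintype.card_fin]

end

theorem stmt_4_general {m : ℕ} (h : Matrix (Fin m) (Fin m) ℝ)
    (hskew : h + hᵀ = 0) (ν : Fin m → ℝ)
    (heq : h - h * Matrix.vecMulVec ν ν - Matrix.vecMulVec ν ν * h = 0) :
    h.rank = 0 ∨ h.rank = 2 := by
  have hT : hᵀ = -h := eq_neg_of_add_eq_zero_right hskew
  rw [eq_vecMulVec_sub_vecMulVec_of_transpose_eq_neg hT heq]
  rcases eq_or_ne (h *ᵥ ν) 0 with ha | ha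
  · simp [ha]
  have hν : ν ≠ 0 := by rintro rfl; exact ha (mulVec_zero h)
  right
  refine rank_vecMulVec_sub_vecMulVec ?_ (dotProduct_self_eq_zero.not.mpr ha)
    (dotProduct_self_eq_zero.not.mpr hν)
  rw [dotProduct_comm]
  exact dotProduct_mulVec_self_eq_zero_of_transpose_eq_neg hT ν

/-- Lemma 2.1: if `h` is a skew-symmetric real `m×m` matrix (`m ≥ 2`) and `ν` a unit column
vector with `h − h ν νᵀ − ν νᵀ h = 0`, then `rank h = 0` or `rank h = 2`. -/
theorem stmt_4 {m : ℕ} (hm : 2 ≤ m) (h : Matrix (Fin m) (Fin m) ℝ)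
    (hskew : h + hᵀ = 0) (ν : Fin m → ℝ) (hunit : ∑ i, ν i ^ 2 = 1)
    (heq : h - h * Matrix.vecMulVec ν ν - Matrix.vecMulVec ν ν * h = 0) :
    h.rank = 0 ∨ h.rank = 2 :=
  stmt_4_general h hskew ν heq
end

section
/- Let h be a skew-symmetric real m×m matrix (m ≥ 2) and let ν ∈ ℝ^m be a unit vector. Then the following are equivalent: (i) for all indices I, J, K ∈ {1,…,m}: ν_K h_{IJ} + ν_I h_{JK} + ν_J h_{KI} = 0; (ii) for all indices I, J ∈ {1,…,m}: h_{IJ} − ν_J Σ_K ν_K h_{IK} − ν_I Σ_K ν_K h_{KJ} = 0. (In the setting of a C² function u and C¹ vector field F with Θ_u := du + Σ F_I dx^I, taking h_{IJ} = ∂_I F_J − ∂_J F_I and ν the horizontal normal at a nonsingular point, condition (i) is the Frobenius integrability condition Θ_u ∧ dΘ_u = 0 at that point.) -/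
/-!
Put `w_I := Σ_K ν_K h_{IK}`; by skew-symmetry `Σ_K ν_K h_{KJ} = -w_J`, so condition (ii) says that
`h_{IJ} = ν_J w_I - ν_I w_J`, i.e. `h = w ∧ ν`. Any such `h` satisfies the cyclic identity (i).
Conversely, contracting (i) with `ν_K` and using `Σ_K ν_K² = 1` gives back exactly this form of `h`.
-/

namespace Matrix

variable {ι R : Type*} [CommRing R]

theorem cyclic_sum_eq_zero_of_eq_wedge {h : Matrix ι ι R} {ν w : ι → R}
    (hw : ∀ I J, h I J = ν J * w I - ν I * w J) (I J K : ι) :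
    ν K * h I J + ν I * h J K + ν J * h K I = 0 := by
  rw [hw I J, hw J K, hw K I]
  ring

variable [Fintype ι] {h : Matrix ι ι R}

theorem sum_mul_apply_left_of_skew (hskew : ∀ I J, h I J + h J I = 0) (ν : ι → R) (J : ι) :
    ∑ K, ν K * h K J = -∑ K, ν K * h J K := by
  rw [← Finset.sum_neg_distrib]
  exact Finset.sum_congr rfl fun K _ => by linear_combination ν K * hskew K J

theorem eq_wedge_of_cyclic_sum_eq_zero (hskew : ∀ I J, h I J + h J I = 0) {ν : ι → R}
    (hunit : ∑ i, ν i ^ 2 = 1) (H : ∀ I J K, ν K * h I J + ν I * h J K + ν J * h K I = 0)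
    (I J : ι) : h I J = ν J * ∑ K, ν K * h I K - ν I * ∑ K, ν K * h J K := by
  have contracted : ∑ K, ν K * (ν K * h I J + ν I * h J K + ν J * h K I) = 0 :=
    Finset.sum_eq_zero fun K _ => by rw [H I J K, mul_zero]
  have expand : ∑ K, ν K * (ν K * h I J + ν I * h J K + ν J * h K I)
      = (∑ K, ν K ^ 2) * h I J + ν I * ∑ K, ν K * h J K + ν J * ∑ K, ν K * h K I := by
    simp only [Finset.mul_sum, Finset.sum_mul, ← Finset.sum_add_distrib]
    exact Finset.sum_congr rfl fun K _ => by ring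
  rw [expand, hunit, sum_mul_apply_left_of_skew hskew] at contracted
  linear_combination contracted

theorem sub_sub_eq_zero_iff_eq_wedge (hskew : ∀ I J, h I J + h J I = 0) (ν : ι → R) (I J : ι) :
    h I J - ν J * ∑ K, ν K * h I K - ν I * ∑ K, ν K * h K J = 0
      ↔ h I J = ν J * ∑ K, ν K * h I K - ν I * ∑ K, ν K * h J K := by
  rw [sum_mul_apply_left_of_skew hskew]
  constructor <;> intro H <;> linear_combination H

end Matrix

open Matrix

theorem stmt_5_general {m : ℕ} (h : Matrix (Fin m) (Fin m) ℝ)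
    (hskew : ∀ I J, h I J + h J I = 0) (ν : Fin m → ℝ) (hunit : ∑ i, ν i ^ 2 = 1) :
    (∀ I J K : Fin m, ν K * h I J + ν I * h J K + ν J * h K I = 0)
    ↔ (∀ I J : Fin m, h I J - ν J * ∑ K, ν K * h I K - ν I * ∑ K, ν K * h K J = 0) := by
  simp only [sub_sub_eq_zero_iff_eq_wedge hskew]
  exact ⟨eq_wedge_of_cyclic_sum_eq_zero hskew hunit, cyclic_sum_eq_zero_of_eq_wedge⟩

/-- For a skew-symmetric real `m×m` matrix `h` (`m ≥ 2`) and a unit vector `ν`, the Frobenius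
integrability condition `ν_K h_{IJ} + ν_I h_{JK} + ν_J h_{KI} = 0` (for all `I, J, K`) is
equivalent to `h_{IJ} − ν_J Σ_K ν_K h_{IK} − ν_I Σ_K ν_K h_{KJ} = 0` (for all `I, J`). -/
theorem stmt_5 {m : ℕ} (hm : 2 ≤ m) (h : Matrix (Fin m) (Fin m) ℝ)
    (hskew : ∀ I J, h I J + h J I = 0) (ν : Fin m → ℝ) (hunit : ∑ i, ν i ^ 2 = 1) :
    (∀ I J K : Fin m, ν K * h I J + ν I * h J K + ν J * h K I = 0)
    ↔ (∀ I J : Fin m, h I J - ν J * ∑ K, ν K * h I K - ν I * ∑ K, ν K * h K J = 0) :=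
  stmt_5_general h hskew ν hunit
end

section
/- Let Ω ⊆ ℝ^m be an open set, u ∈ C²(Ω) real-valued, F ∈ C¹(Ω, ℝ^m), and let p ∈ Ω satisfy ∇u(p) + F(p) ≠ 0. With D_u := |∇u + F|, ν_J := (∂_J u + F_J)/D_u, and δ_I := ∂_I − ν_I ν_K ∂_K (summation over K), the following identity holds at p for all I, J: δ_I ν_J − δ_J ν_I = (1/D_u) ( h_{IJ} − ν_J Σ_K ν_K h_{IK} − ν_I Σ_K ν_K h_{KJ} ). -/
/-- The `J`-th component `ν_J = (∂_J u + F_J)/|∇u + F|` of the horizontal normal,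
as a scalar function. -/
noncomputable def nuc {m : ℕ} (u : EuclideanSpace ℝ (Fin m) → ℝ)
    (F : EuclideanSpace ℝ (Fin m) → EuclideanSpace ℝ (Fin m)) (J : Fin m)
    (x : EuclideanSpace ℝ (Fin m)) : ℝ :=
  (pd u x J + F x J) / ‖gradient u x + F x‖

open Finset

-- `a I J` stands for `∂_I ν_J` and `b I J` for `∂_I N_J`.
lemma antisymm_tangential_deriv_eq {ι : Type*} [Fintype ι] (a b : ι → ι → ℝ) (ν : ι → ℝ)
    (D : ℝ) (ha : ∀ I J, a I J = (b I J - ν J * ∑ K, ν K * b I K) / D) (I J : ι) :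
    (a I J - ν I * ∑ K, ν K * a K J) - (a J I - ν J * ∑ K, ν K * a K I)
      = (1 / D) * ((b I J - b J I) - ν J * ∑ K, ν K * (b I K - b K I)
          - ν I * ∑ K, ν K * (b K J - b J K)) := by
  have hsum : ∀ J, ∑ K, ν K * a K J
      = (∑ K, ν K * b K J - ν J * ∑ K, ν K * ∑ L, ν L * b K L) / D := by
    intro J
    simp only [ha, mul_div_assoc', ← sum_div, mul_sub, sum_sub_distrib, mul_sum]
    congr 2
    refine sum_congr rfl fun K _ => sum_congr rfl fun L _ => by ring
  rw [hsum, hsum, ha I J, ha J I]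
  simp only [mul_sub, sum_sub_distrib]
  ring

theorem HasFDerivAt.norm_of_ne_zero {E F : Type*} [NormedAddCommGroup E] [NormedSpace ℝ E]
    [NormedAddCommGroup F] [InnerProductSpace ℝ F] {f : E → F} {f' : E →L[ℝ] F} {x : E}
    (hf : HasFDerivAt f f' x) (h0 : f x ≠ 0) :
    HasFDerivAt (‖f ·‖) (‖f x‖⁻¹ • (innerSL ℝ (f x)).comp f') x := by
  have := hf.norm_sq.sqrt (by positivity)
  simp only [Real.sqrt_sq (norm_nonneg _)] at this
  convert this using 1
  ext v
  simp only [smul_apply, ContinuousLinearMap.comp_apply, coe_innerSL_apply,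
    smul_eq_mul, nsmul_eq_mul, Nat.cast_ofNat]
  field_simp

section

variable {m : ℕ} {p : EuclideanSpace ℝ (Fin m)} {ι : Type*} [Fintype ι]
  {N : EuclideanSpace ℝ (Fin m) → EuclideanSpace ℝ ι}

lemma pd_eq_fderiv_apply (hN : DifferentiableAt ℝ N p) (I : Fin m) (K : ι) :
    pd (fun x => N x K) p I = fderiv ℝ N p (EuclideanSpace.single I 1) K := by
  have h : HasFDerivAt (fun x => N x K) ((PiLp.proj 2 _ K).comp (fderiv ℝ N p)) p :=
    (PiLp.hasFDerivAt_apply (𝕜 := ℝ) 2 (N p) K).comp p hN.hasFDerivAt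
  rw [pd, h.fderiv]
  rfl

lemma pd_div_norm (hN : DifferentiableAt ℝ N p) (h0 : N p ≠ 0) (I : Fin m) (J : ι) :
    pd (fun x => N x J / ‖N x‖) p I
      = (pd (fun x => N x J) p I
          - N p J / ‖N p‖ * ∑ K, N p K / ‖N p‖ * pd (fun x => N x K) p I) / ‖N p‖ := by
  have hcomp : HasFDerivAt (fun x => N x J) ((PiLp.proj 2 _ J).comp (fderiv ℝ N p)) p :=
    (PiLp.hasFDerivAt_apply (𝕜 := ℝ) 2 (N p) J).comp p hN.hasFDerivAt
  have hinv : HasFDerivAt (fun x => ‖N x‖⁻¹) _ p :=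
    (hasDerivAt_inv (norm_ne_zero_iff.2 h0)).comp_hasFDerivAt p (hN.hasFDerivAt.norm_of_ne_zero h0)
  simp only [pd_eq_fderiv_apply hN]
  rw [pd]
  simp only [div_eq_mul_inv]
  rw [(hcomp.fun_mul hinv).fderiv]
  simp only [add_apply, smul_apply, ContinuousLinearMap.comp_apply, coe_innerSL_apply,
    PiLp.inner_apply, RCLike.inner_apply, Real.ringHom_apply, smul_eq_mul, PiLp.proj_apply]
  set v := fderiv ℝ N p (EuclideanSpace.single I 1)
  have hsum : ∑ K, N p K * ‖N p‖⁻¹ * v K = ‖N p‖⁻¹ * ∑ K, v K * N p K := by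
    rw [mul_sum]
    exact sum_congr rfl fun _ _ => by ring
  rw [hsum]
  ring

lemma pd_add {f g : EuclideanSpace ℝ (Fin m) → ℝ} (hf : DifferentiableAt ℝ f p)
    (hg : DifferentiableAt ℝ g p) (I : Fin m) :
    pd (fun x => f x + g x) p I = pd f p I + pd g p I := by
  simp [pd, fderiv_fun_add hf hg]

lemma gradient_apply_eq_pd (u : EuclideanSpace ℝ (Fin m) → ℝ) (x : EuclideanSpace ℝ (Fin m))
    (J : Fin m) : gradient u x J = pd u x J := by
  rw [pd, gradient, ← InnerProductSpace.toDual_symm_apply, EuclideanSpace.inner_single_right]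
  simp

lemma pd_gradient_eq_fderiv_fderiv {u : EuclideanSpace ℝ (Fin m) → ℝ}
    (hu : DifferentiableAt ℝ (fderiv ℝ u) p) (I J : Fin m) :
    pd (fun x => gradient u x J) p I
      = fderiv ℝ (fderiv ℝ u) p (EuclideanSpace.single I 1) (EuclideanSpace.single J 1) := by
  simp only [gradient_apply_eq_pd, pd]
  rw [fderiv_clm_apply hu (differentiableAt_const _)]
  simp

end

/-- Identity (A8): at a nonsingular point `p` of a `C²` function `u` with `C¹` field `F`,
`δ_I ν_J − δ_J ν_I = (1/D_u)(h_{IJ} − ν_J ν_K h_{IK} − ν_I ν_K h_{KJ})`. -/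
theorem stmt_6 {m : ℕ} (Ω : Set (EuclideanSpace ℝ (Fin m))) (hΩ : IsOpen Ω)
    (u : EuclideanSpace ℝ (Fin m) → ℝ)
    (F : EuclideanSpace ℝ (Fin m) → EuclideanSpace ℝ (Fin m))
    (hu : ContDiffOn ℝ 2 u Ω) (hF : ContDiffOn ℝ 1 F Ω)
    (p : EuclideanSpace ℝ (Fin m)) (hp : p ∈ Ω) (hnz : gradient u p + F p ≠ 0) :
    ∀ I J : Fin m,
      (pd (nuc u F J) p I - nuc u F I p * ∑ K, nuc u F K p * pd (nuc u F J) p K)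
        - (pd (nuc u F I) p J - nuc u F J p * ∑ K, nuc u F K p * pd (nuc u F I) p K)
      = (1 / ‖gradient u p + F p‖) *
          (hmat F p I J - nuc u F J p * ∑ K, nuc u F K p * hmat F p I K
            - nuc u F I p * ∑ K, nuc u F K p * hmat F p K J) := by
  intro I J
  set N := fun x => gradient u x + F x
  have hu2 : ContDiffAt ℝ 2 u p := hu.contDiffAt (hΩ.mem_nhds hp)
  have hDu : DifferentiableAt ℝ (fderiv ℝ u) p :=
    (hu2.fderiv_right (m := 1) (by norm_num)).differentiableAt one_ne_zero
  have hDF : DifferentiableAt ℝ F p :=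
    (hF.contDiffAt (hΩ.mem_nhds hp)).differentiableAt one_ne_zero
  have hgrad : ∀ J, DifferentiableAt ℝ (fun x => gradient u x J) p := fun J => by
    simp only [gradient_apply_eq_pd, pd]
    exact hDu.clm_apply (differentiableAt_const _)
  have hFJ : ∀ J, DifferentiableAt ℝ (fun x => F x J) p := differentiableAt_euclidean.1 hDF
  have hN : DifferentiableAt ℝ N p :=
    differentiableAt_euclidean.2 fun J => (hgrad J).add (hFJ J)
  have hnuc : ∀ J, nuc u F J = fun x => N x J / ‖N x‖ := fun J => by
    funext x
    simp [nuc, N, gradient_apply_eq_pd]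
  have hmat_eq : ∀ I J, hmat F p I J = pd (fun x => N x J) p I - pd (fun x => N x I) p J :=
    fun I J => by
      simp only [N, PiLp.add_apply, pd_add (hgrad _) (hFJ _), hmat, pd_gradient_eq_fderiv_fderiv hDu,
        hu2.isSymmSndFDerivAt (by simp) (EuclideanSpace.single I 1)]
      ring
  simp only [hmat_eq]
  exact antisymm_tangential_deriv_eq (fun I J => pd (nuc u F J) p I)
    (fun I J => pd (fun x => N x J) p I) (fun K => nuc u F K p) ‖N p‖
    (fun I J => by simp only [hnuc]; exact pd_div_norm hN hnz I J) I J
end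

section
/- Let Ω be a bounded domain (bounded open connected set) in ℝ^m. Let u ∈ C¹(Ω) be real-valued and F = (F_1, …, F_m) ∈ C¹(Ω, ℝ^m). Let (a^{jk})_{1 ≤ j,k ≤ m} be real constants with a^{jk} + a^{kj} = 0, and suppose that div F^b := Σ_{j,k=1}^m a^{jk} ∂_j F_k > 0 at every point of Ω (or < 0 at every point of Ω). Then the singular set S_F(u) := {p ∈ Ω : ∇u(p) + F(p) = 0} is nowhere dense in Ω. -/
open InnerProductSpace Topology Filter

theorem sum_sum_mul_eq_zero_of_skew_of_symm {ι R : Type*} [Fintype ι] [CommRing R]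
    [NoZeroDivisors R] [CharZero R] {a b : ι → ι → R} (ha : ∀ j k, a j k + a k j = 0)
    (hb : ∀ j k, b j k = b k j) : ∑ j, ∑ k, a j k * b j k = 0 := by
  rw [← self_eq_neg]
  calc ∑ j, ∑ k, a j k * b j k = ∑ j, ∑ k, a k j * b k j := Finset.sum_comm
    _ = -∑ j, ∑ k, a j k * b j k := by
      simp only [← Finset.sum_neg_distrib, ← neg_mul]
      refine Finset.sum_congr rfl fun j _ => Finset.sum_congr rfl fun k _ => ?_
      rw [hb, eq_neg_of_add_eq_zero_left (ha k j)]

theorem closure_sep_inter_subset_of_continuousOn {X Y : Type*} [TopologicalSpace X]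
    [TopologicalSpace Y] [T1Space Y] {s : Set X} {g : X → Y} {c : Y} (hg : ContinuousOn g s) :
    closure {x | x ∈ s ∧ g x = c} ∩ s ⊆ {x | g x = c} := by
  rintro x ⟨hxS, hxs⟩
  have hcont : ContinuousWithinAt g {x | x ∈ s ∧ g x = c} x :=
    (hg x hxs).mono fun y hy => hy.1
  have himage : g '' {x | x ∈ s ∧ g x = c} ⊆ {c} := by
    rintro _ ⟨y, hy, rfl⟩
    exact hy.2
  simpa using closure_mono himage (hcont.mem_closure_image hxS)

section Gradient

variable {E : Type*} [NormedAddCommGroup E] [InnerProductSpace ℝ E] [CompleteSpace E]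

theorem ContDiffOn.continuousOn_gradient {u : E → ℝ} {Ω : Set E} (hu : ContDiffOn ℝ 1 u Ω)
    (hΩ : IsOpen Ω) : ContinuousOn (gradient u) Ω :=
  (toDual ℝ E).symm.continuous.comp_continuousOn (hu.continuousOn_fderiv_of_isOpen hΩ le_rfl)

theorem inner_fderiv_comm_of_eventually_hasGradientAt {u : E → ℝ} {G : E → E} {p : E}
    (hu : ∀ᶠ y in 𝓝 p, HasGradientAt u (G y) y) (hG : DifferentiableAt ℝ G p) (v w : E) :
    inner ℝ (fderiv ℝ G p v) w = inner ℝ (fderiv ℝ G p w) v := by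
  have hdual : HasFDerivAt (fun y => toDual ℝ E (G y))
      ((toDual ℝ E).toContinuousLinearEquiv.toContinuousLinearMap.comp (fderiv ℝ G p)) p :=
    (toDual ℝ E).toContinuousLinearEquiv.hasFDerivAt.comp p hG.hasFDerivAt
  simpa using second_derivative_symmetric_of_eventually_of_real hu hdual v w

end Gradient

theorem pd_apply_eq_inner_fderiv {m : ℕ}
    {F : EuclideanSpace ℝ (Fin m) → EuclideanSpace ℝ (Fin m)} {p : EuclideanSpace ℝ (Fin m)}
    (hF : DifferentiableAt ℝ F p) (j k : Fin m) :
    pd (fun x => F x k) p j =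
      inner ℝ (fderiv ℝ F p (EuclideanSpace.single j 1)) (EuclideanSpace.single k 1) := by
  have h := (EuclideanSpace.proj (𝕜 := ℝ) k).hasFDerivAt.comp p hF.hasFDerivAt
  rw [pd, show (fun x => F x k) = EuclideanSpace.proj k ∘ F from rfl, h.fderiv]
  simp [EuclideanSpace.inner_single_right]

theorem stmt_7_general {m : ℕ} (Ω : Set (EuclideanSpace ℝ (Fin m))) (hΩ : IsOpen Ω)
    (u : EuclideanSpace ℝ (Fin m) → ℝ)
    (F : EuclideanSpace ℝ (Fin m) → EuclideanSpace ℝ (Fin m))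
    (hu : ContDiffOn ℝ 1 u Ω) (hF : ContDiffOn ℝ 1 F Ω)
    (a : Fin m → Fin m → ℝ) (ha : ∀ j k, a j k + a k j = 0)
    (hdiv : (∀ p ∈ Ω, 0 < ∑ j, ∑ k, a j k * pd (fun x => F x k) p j)
          ∨ (∀ p ∈ Ω, ∑ j, ∑ k, a j k * pd (fun x => F x k) p j < 0)) :
    interior (closure {p | p ∈ Ω ∧ gradient u p + F p = 0} ∩ Ω) = ∅ := by
  by_contra hne
  obtain ⟨p, hp⟩ := Set.nonempty_iff_ne_empty.2 hne
  have hpΩ : p ∈ Ω := interior_subset hp |>.2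
  have hsingular : ∀ᶠ y in 𝓝 p, y ∈ Ω ∧ gradient u y + F y = 0 := by
    filter_upwards [isOpen_interior.mem_nhds hp] with y hy
    have hyΩ : y ∈ Ω := (interior_subset hy).2
    exact ⟨hyΩ, closure_sep_inter_subset_of_continuousOn
      ((hu.continuousOn_gradient hΩ).add hF.continuousOn) (interior_subset hy)⟩
  have hgrad : ∀ᶠ y in 𝓝 p, HasGradientAt u (-F y) y := by
    filter_upwards [hsingular] with y ⟨hyΩ, hy⟩
    rw [← eq_neg_of_add_eq_zero_left hy]
    exact ((hu.differentiableOn one_ne_zero).differentiableAt (hΩ.mem_nhds hyΩ)).hasGradientAt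
  have hFp : DifferentiableAt ℝ F p :=
    (hF.differentiableOn one_ne_zero).differentiableAt (hΩ.mem_nhds hpΩ)
  have hsymm : ∀ j k, pd (fun x => F x k) p j = pd (fun x => F x j) p k := fun j k => by
    have h := inner_fderiv_comm_of_eventually_hasGradientAt hgrad hFp.neg
      (EuclideanSpace.single j 1) (EuclideanSpace.single k 1)
    simpa only [fderiv_fun_neg, neg_apply, inner_neg_left, neg_inj,
      ← pd_apply_eq_inner_fderiv hFp] using h
  have hzero := sum_sum_mul_eq_zero_of_skew_of_symm ha hsymm
  rcases hdiv with hpos | hneg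
  · exact (hpos p hpΩ).ne' hzero
  · exact (hneg p hpΩ).ne hzero

/-- Proposition 3.4: if `Ω ⊆ ℝ^m` is a bounded domain, `u ∈ C¹(Ω)`, `F ∈ C¹(Ω, ℝ^m)`, and
`div F^b = Σ_{j,k} a^{jk} ∂_j F_k` is everywhere positive (or everywhere negative) on `Ω`
for skew-symmetric constants `a^{jk}`, then the singular set
`S_F(u) = {p ∈ Ω : ∇u(p) + F(p) = 0}` is nowhere dense in `Ω`
(its closure in `Ω` has empty interior). -/
theorem stmt_7 {m : ℕ} (Ω : Set (EuclideanSpace ℝ (Fin m))) (hΩ : IsOpen Ω)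
    (hconn : IsConnected Ω) (hbdd : Bornology.IsBounded Ω)
    (u : EuclideanSpace ℝ (Fin m) → ℝ)
    (F : EuclideanSpace ℝ (Fin m) → EuclideanSpace ℝ (Fin m))
    (hu : ContDiffOn ℝ 1 u Ω) (hF : ContDiffOn ℝ 1 F Ω)
    (a : Fin m → Fin m → ℝ) (ha : ∀ j k, a j k + a k j = 0)
    (hdiv : (∀ p ∈ Ω, 0 < ∑ j, ∑ k, a j k * pd (fun x => F x k) p j)
          ∨ (∀ p ∈ Ω, ∑ j, ∑ k, a j k * pd (fun x => F x k) p j < 0)) :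
    interior (closure {p | p ∈ Ω ∧ gradient u p + F p = 0} ∩ Ω) = ∅ :=
  stmt_7_general Ω hΩ u F hu hF a ha hdiv
end

section
/- Let m = 2 and consider F(x, y) = (−y, x), u(x, y) = x y and v(x, y) = x y + y on ℝ². Then for every point (x, y) with x > 0: ∇u + F ≠ 0, ∇v + F ≠ 0, and the horizontal normals agree, (∇u + F)/|∇u + F| = (∇v + F)/|∇v + F| = (0, 1); nevertheless ∇u ≠ ∇v at every such point. Hence in dimension 2 the equality of horizontal normals on an open set does not imply equality of gradients. -/
/-! On `{x > 0}` both `∇u + F = (0, 2x)` and `∇v + F = (0, 2x + 1)` are positive multiples of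
`e₂`, so they normalize to `e₂`, while `∇v - ∇u = e₁` never vanishes. -/

/-- The vector field `F(x, y) = (−y, x)` on `ℝ²` (the `p`-area situation). -/
noncomputable def Fex (p : EuclideanSpace ℝ (Fin 2)) : EuclideanSpace ℝ (Fin 2) :=
  WithLp.toLp 2 ![-(p 1), p 0]

/-- `u(x, y) = x y`. -/
noncomputable def uex (p : EuclideanSpace ℝ (Fin 2)) : ℝ := p 0 * p 1

/-- `v(x, y) = x y + y`. -/
noncomputable def vex (p : EuclideanSpace ℝ (Fin 2)) : ℝ := p 0 * p 1 + p 1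

open NormedSpace

lemma hasGradientAt_mul_add_mul (c : ℝ) (p : EuclideanSpace ℝ (Fin 2)) :
    HasGradientAt (fun q : EuclideanSpace ℝ (Fin 2) => q 0 * q 1 + c * q 1)
      !₂[p 1, p 0 + c] p := by
  have h0 := (EuclideanSpace.proj (0 : Fin 2) (𝕜 := ℝ)).hasFDerivAt (x := p)
  have h1 := (EuclideanSpace.proj (1 : Fin 2) (𝕜 := ℝ)).hasFDerivAt (x := p)
  rw [hasGradientAt_iff_hasFDerivAt]
  refine ((h0.mul h1).add (h1.const_mul c)).congr_fderiv ?_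
  ext q
  simp [PiLp.inner_apply, Fin.sum_univ_two]
  ring

lemma gradient_uex (p : EuclideanSpace ℝ (Fin 2)) : gradient uex p = !₂[p 1, p 0] := by
  have h := (hasGradientAt_mul_add_mul 0 p).gradient
  simp only [zero_mul, add_zero] at h
  exact h

lemma gradient_vex (p : EuclideanSpace ℝ (Fin 2)) : gradient vex p = !₂[p 1, p 0 + 1] := by
  have h := (hasGradientAt_mul_add_mul 1 p).gradient
  simp only [one_mul] at h
  exact h

lemma gradient_uex_add_Fex (p : EuclideanSpace ℝ (Fin 2)) :
    gradient uex p + Fex p = (2 * p 0) • EuclideanSpace.single 1 1 := by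
  ext i; fin_cases i <;> simp [gradient_uex, Fex]; ring

lemma gradient_vex_add_Fex (p : EuclideanSpace ℝ (Fin 2)) :
    gradient vex p + Fex p = (2 * p 0 + 1) • EuclideanSpace.single 1 1 := by
  ext i; fin_cases i <;> simp [gradient_vex, Fex]; ring

lemma normalize_smul_single_of_pos {ι : Type*} [Fintype ι] [DecidableEq ι] {r : ℝ} (hr : 0 < r)
    (i : ι) :
    normalize (r • EuclideanSpace.single i (1 : ℝ)) = EuclideanSpace.single i 1 := by
  rw [normalize_smul_of_pos hr, normalize_eq_self_of_norm_eq_one (by simp)]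

/-- Example 2.2: for `F = (−y, x)`, `u = xy`, `v = xy + y`, on the half-plane `{x > 0}`
both `∇u + F` and `∇v + F` are nonzero, the horizontal normals agree and equal `(0, 1)`,
yet `∇u ≠ ∇v` everywhere there: equality of horizontal normals on an open set does not
imply equality of gradients in dimension 2. -/
theorem stmt_9 :
    ∀ p : EuclideanSpace ℝ (Fin 2), 0 < p 0 →
      gradient uex p + Fex p ≠ 0 ∧
      gradient vex p + Fex p ≠ 0 ∧
      ‖gradient uex p + Fex p‖⁻¹ • (gradient uex p + Fex p)
        = ‖gradient vex p + Fex p‖⁻¹ • (gradient vex p + Fex p) ∧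
      ‖gradient uex p + Fex p‖⁻¹ • (gradient uex p + Fex p)
        = EuclideanSpace.single (1 : Fin 2) (1 : ℝ) ∧
      gradient uex p ≠ gradient vex p := by
  intro p hp
  have hu : normalize (gradient uex p + Fex p) = EuclideanSpace.single 1 1 := by
    rw [gradient_uex_add_Fex, normalize_smul_single_of_pos (by positivity)]
  have hv : normalize (gradient vex p + Fex p) = EuclideanSpace.single 1 1 := by
    rw [gradient_vex_add_Fex, normalize_smul_single_of_pos (by positivity)]
  refine ⟨?_, ?_, hu.trans hv.symm, hu, ?_⟩
  · exact norm_normalize_eq_one_iff.mp (by simp [hu])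
  · exact norm_normalize_eq_one_iff.mp (by simp [hv])
  · intro h
    simpa [gradient_uex, gradient_vex] using congrArg (· 1) h
end

section
/- Let U be a real m×m matrix (m ≥ 2) with U = −Uᵀ and rank(U) = 2, and let ν ∈ ℝ^m be a vector with U ν ≠ 0. Set ρ := −‖U² ν‖² / ‖U ν‖². Then U ν and U² ν are eigenvectors of U² with the common eigenvalue ρ, i.e., U²(U ν) = ρ U ν and U²(U² ν) = ρ U² ν. -/
open Matrix

/-! Skew-symmetry makes `x ⬝ᵥ U *ᵥ x = 0`, so `a = U ν` and `b = U a` are orthogonal and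
`a ⬝ᵥ U b = -(b ⬝ᵥ b)`. With `ρ = -(b ⬝ᵥ b) / (a ⬝ᵥ a)` the vector `U b - ρ a` lies in the
range of `U` and is orthogonal to both `a` and `b`; since the range is two-dimensional, it
vanishes as soon as `b ≠ 0` (and trivially if `b = 0`). Hence `U² a = ρ a`, and applying `U`
once more gives `U² b = ρ b`. -/

section DotProduct

variable {ι : Type*} [Fintype ι]

theorem linearIndependent_of_dotProduct_eq_zero {κ : Type*} {v : κ → ι → ℝ}
    (hv : ∀ k, v k ≠ 0) (horth : Pairwise fun k l => v k ⬝ᵥ v l = 0) :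
    LinearIndependent ℝ v := by
  rw [linearIndependent_iff']
  intro s g hsum k hk
  have hdot : g k * (v k ⬝ᵥ v k) = 0 := by
    have := congrArg (v k ⬝ᵥ ·) hsum
    simp only [dotProduct_sum, dotProduct_smul, smul_eq_mul, dotProduct_zero] at this
    rwa [Finset.sum_eq_single k (fun l _ hlk => by rw [horth (Ne.symm hlk), mul_zero])
      (fun hk' => absurd hk hk')] at this
  exact (mul_eq_zero.mp hdot).resolve_right (mt dotProduct_self_eq_zero.mp (hv k))

/-- Three pairwise orthogonal nonzero vectors do not fit in a subspace of dimension two. -/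
theorem eq_zero_of_dotProduct_eq_zero_of_finrank_le_two {W : Submodule ℝ (ι → ℝ)}
    (hW : Module.finrank ℝ W ≤ 2) {a b w : ι → ℝ} (ha : a ∈ W) (hb : b ∈ W) (hw : w ∈ W)
    (ha0 : a ≠ 0) (hb0 : b ≠ 0) (hab : a ⬝ᵥ b = 0) (haw : a ⬝ᵥ w = 0) (hbw : b ⬝ᵥ w = 0) :
    w = 0 := by
  by_contra hw0
  have hli : LinearIndependent ℝ ![a, b, w] := by
    refine linearIndependent_of_dotProduct_eq_zero (fun k => ?_) fun k l hkl => ?_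
    · fin_cases k <;> assumption
    · fin_cases k <;> fin_cases l <;>
        simp_all [dotProduct_comm]
  have hspan : Submodule.span ℝ (Set.range ![a, b, w]) ≤ W := by
    rw [Submodule.span_le, Matrix.range_cons, Matrix.range_cons, Matrix.range_cons,
      Matrix.range_empty]
    simp [Set.insert_subset_iff, ha, hb, hw]
  have := Submodule.finrank_mono hspan
  rw [finrank_span_eq_card hli, Fintype.card_fin] at this
  omega

end DotProduct

section SkewSymmetric

variable {ι : Type*} [Fintype ι] {U : Matrix ι ι ℝ}

theorem dotProduct_mulVec_of_eq_neg_transpose (hU : U = -Uᵀ) (x y : ι → ℝ) :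
    x ⬝ᵥ U *ᵥ y = -(U *ᵥ x ⬝ᵥ y) := by
  conv_lhs => rw [hU]
  rw [neg_mulVec, dotProduct_neg, mulVec_transpose, dotProduct_comm x,
    ← dotProduct_mulVec, dotProduct_comm]

theorem dotProduct_mulVec_self_of_eq_neg_transpose (hU : U = -Uᵀ) (x : ι → ℝ) :
    x ⬝ᵥ U *ᵥ x = 0 := by
  have := dotProduct_mulVec_of_eq_neg_transpose hU x x
  rw [dotProduct_comm (U *ᵥ x)] at this
  linarith

theorem mulVec_mulVec_eq_smul_of_rank_le_two (hU : U = -Uᵀ) (hrank : U.rank ≤ 2)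
    {a : ι → ℝ} (ha : a ∈ LinearMap.range U.mulVecLin) (ha0 : a ≠ 0) :
    U *ᵥ (U *ᵥ a) = (-(U *ᵥ a ⬝ᵥ U *ᵥ a) / (a ⬝ᵥ a)) • a := by
  set b := U *ᵥ a
  set ρ := -(b ⬝ᵥ b) / (a ⬝ᵥ a)
  have haa : a ⬝ᵥ a ≠ 0 := mt dotProduct_self_eq_zero.mp ha0
  have hρ : ρ * (a ⬝ᵥ a) = -(b ⬝ᵥ b) := div_mul_cancel₀ _ haa
  by_cases hb0 : b = 0
  · simp [ρ, hb0]
  have hab : a ⬝ᵥ b = 0 := dotProduct_mulVec_self_of_eq_neg_transpose hU a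
  have hrange (x : ι → ℝ) : U *ᵥ x ∈ LinearMap.range U.mulVecLin := ⟨x, rfl⟩
  refine sub_eq_zero.mp (eq_zero_of_dotProduct_eq_zero_of_finrank_le_two hrank ha
    (hrange a) (Submodule.sub_mem _ (hrange b) (Submodule.smul_mem _ ρ ha)) ha0 hb0 hab ?_ ?_)
  · rw [dotProduct_sub, dotProduct_smul, smul_eq_mul, hρ,
      dotProduct_mulVec_of_eq_neg_transpose hU]
    ring
  · rw [dotProduct_sub, dotProduct_smul, dotProduct_comm b a, hab,
      dotProduct_mulVec_self_of_eq_neg_transpose hU]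
    simp

end SkewSymmetric

theorem stmt_14_general {m : ℕ} (U : Matrix (Fin m) (Fin m) ℝ)
    (hskew : U = -Uᵀ) (hrank : U.rank = 2) (ν : Fin m → ℝ) (hν : U.mulVec ν ≠ 0)
    (ρ : ℝ)
    (hρ : ρ = -(∑ i, ((U * U).mulVec ν i) ^ 2) / (∑ i, (U.mulVec ν i) ^ 2)) :
    (U * U).mulVec (U.mulVec ν) = ρ • U.mulVec ν ∧
    (U * U).mulVec ((U * U).mulVec ν) = ρ • (U * U).mulVec ν := by
  have hsq (v : Fin m → ℝ) : ∑ i, v i ^ 2 = v ⬝ᵥ v := by simp [dotProduct, sq]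
  simp only [← mulVec_mulVec, hsq] at hρ ⊢
  have key := mulVec_mulVec_eq_smul_of_rank_le_two hskew hrank.le
    (show U *ᵥ ν ∈ _ from ⟨ν, rfl⟩) hν
  rw [← hρ] at key
  exact ⟨key, by rw [key, mulVec_smul]⟩

/-- Proposition A.1 (5): if `U` is a real skew-symmetric `m×m` matrix of rank `2` (`m ≥ 2`)
and `U ν ≠ 0`, then `U ν` and `U² ν` are eigenvectors of `U²` with the common eigenvalue
`ρ = −‖U² ν‖²/‖U ν‖²`. -/
theorem stmt_14 {m : ℕ} (hm : 2 ≤ m) (U : Matrix (Fin m) (Fin m) ℝ)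
    (hskew : U = -Uᵀ) (hrank : U.rank = 2) (ν : Fin m → ℝ) (hν : U.mulVec ν ≠ 0)
    (ρ : ℝ)
    (hρ : ρ = -(∑ i, ((U * U).mulVec ν i) ^ 2) / (∑ i, (U.mulVec ν i) ^ 2)) :
    (U * U).mulVec (U.mulVec ν) = ρ • U.mulVec ν ∧
    (U * U).mulVec ((U * U).mulVec ν) = ρ • (U * U).mulVec ν :=
  stmt_14_general U hskew hrank ν hν ρ hρ
end

section
/- Let U be a real m×m matrix (m ≥ 2) with U = −Uᵀ and rank(U) = 2. Let ν ∈ ℝ^m be a unit column vector satisfying U² ν = ρ ν for some nonzero real number ρ. Then U = (U ν) νᵀ − ν (U ν)ᵀ. -/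
/-!
Put `w = U ν`. Skew-symmetry gives `ν ⬝ w = 0` and, from `U w = ρ ν`, `ρ = -(w ⬝ w)`, so `ν` and
`w` are orthogonal, nonzero and both lie in the range of `U`. As the range has dimension two it is
`span {ν, w}`, and the coordinates of `U x` in this orthogonal basis are `ν ⬝ U x = -(w ⬝ x)` and
`w ⬝ U x = -(U w ⬝ x) = (w ⬝ w) (ν ⬝ x)`; that is, `U x = (ν ⬝ x) w - (w ⬝ x) ν`.
-/

open Matrix

namespace Matrix

variable {n K : Type*} [Fintype n]

section CommRing

variable [CommRing K] {U : Matrix n n K} {ν w : n → K} {ρ : K}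

theorem dotProduct_left_smul_add_smul (hνν : ν ⬝ᵥ ν = 1) (hνw : ν ⬝ᵥ w = 0) (a b : K) :
    ν ⬝ᵥ (a • ν + b • w) = a := by
  simp [dotProduct_add, dotProduct_smul, hνν, hνw]

theorem dotProduct_right_smul_add_smul (hνw : ν ⬝ᵥ w = 0) (a b : K) :
    w ⬝ᵥ (a • ν + b • w) = b * (w ⬝ᵥ w) := by
  simp [dotProduct_add, dotProduct_smul, dotProduct_comm w ν, hνw]

theorem dotProduct_mulVec_eq_neg_of_transpose_eq_neg (hU : Uᵀ = -U) (x y : n → K) :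
    x ⬝ᵥ U *ᵥ y = -(U *ᵥ x ⬝ᵥ y) := by
  rw [dotProduct_mulVec, ← mulVec_transpose, hU, neg_mulVec, neg_dotProduct]

theorem eq_neg_dotProduct_self_of_mul_self_mulVec_eq_smul (hU : Uᵀ = -U) (hνν : ν ⬝ᵥ ν = 1)
    (heig : (U * U) *ᵥ ν = ρ • ν) : ρ = -(U *ᵥ ν ⬝ᵥ U *ᵥ ν) := by
  have h := dotProduct_mulVec_eq_neg_of_transpose_eq_neg hU ν (U *ᵥ ν)
  rwa [mulVec_mulVec, heig, dotProduct_smul, hνν, smul_eq_mul, mul_one] at h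

theorem mulVec_dotProduct_mulVec_self_ne_zero (hU : Uᵀ = -U) (hνν : ν ⬝ᵥ ν = 1) (hρ : ρ ≠ 0)
    (heig : (U * U) *ᵥ ν = ρ • ν) : U *ᵥ ν ⬝ᵥ U *ᵥ ν ≠ 0 := fun h ↦
  hρ (by rw [eq_neg_dotProduct_self_of_mul_self_mulVec_eq_smul hU hνν heig, h, neg_zero])

end CommRing

variable [Field K] {U : Matrix n n K} {ν w : n → K} {ρ : K}

theorem linearIndependent_pair_of_orthogonal (hνν : ν ⬝ᵥ ν = 1) (hνw : ν ⬝ᵥ w = 0)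
    (hww : w ⬝ᵥ w ≠ 0) : LinearIndependent K ![ν, w] := by
  rw [LinearIndependent.pair_iff]
  intro a b hab
  have ha := dotProduct_left_smul_add_smul hνν hνw a b
  have hb := dotProduct_right_smul_add_smul hνw a b
  rw [hab, dotProduct_zero] at ha hb
  exact ⟨ha.symm, (mul_eq_zero.mp hb.symm).resolve_right hww⟩

variable [NeZero (2 : K)]

theorem dotProduct_mulVec_self_eq_zero_of_transpose_eq_neg_s15 (hU : Uᵀ = -U) (x : n → K) :
    x ⬝ᵥ U *ᵥ x = 0 := by
  have h := dotProduct_mulVec_eq_neg_of_transpose_eq_neg hU x x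
  rw [dotProduct_comm (U *ᵥ x)] at h
  have h2 : (2 : K) * (x ⬝ᵥ U *ᵥ x) = 0 := by linear_combination h
  exact (mul_eq_zero.mp h2).resolve_left two_ne_zero

theorem range_mulVecLin_eq_span_pair (hU : Uᵀ = -U) (hrank : U.rank = 2) (hνν : ν ⬝ᵥ ν = 1)
    (hρ : ρ ≠ 0) (heig : (U * U) *ᵥ ν = ρ • ν) :
    LinearMap.range U.mulVecLin = Submodule.span K {ν, U *ᵥ ν} := by
  have hνw := dotProduct_mulVec_self_eq_zero_of_transpose_eq_neg_s15 hU ν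
  have hww := mulVec_dotProduct_mulVec_self_ne_zero hU hνν hρ heig
  have hspan_le : Submodule.span K {ν, U *ᵥ ν} ≤ LinearMap.range U.mulVecLin := by
    rw [Submodule.span_le, Set.insert_subset_iff, Set.singleton_subset_iff]
    refine ⟨⟨ρ⁻¹ • U *ᵥ ν, ?_⟩, ⟨ν, rfl⟩⟩
    rw [mulVecLin_apply, mulVec_smul, mulVec_mulVec, heig, smul_smul, inv_mul_cancel₀ hρ,
      one_smul]
  have hfinrank : Module.finrank K (Submodule.span K {ν, U *ᵥ ν}) = 2 := by
    rw [← range_cons_cons_empty, finrank_span_eq_card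
      (linearIndependent_pair_of_orthogonal hνν hνw hww), Fintype.card_fin]
  exact (Submodule.eq_of_le_of_finrank_le hspan_le (hrank.trans hfinrank.symm).le).symm

theorem mulVec_eq_of_rank_eq_two (hU : Uᵀ = -U) (hrank : U.rank = 2) (hνν : ν ⬝ᵥ ν = 1)
    (hρ : ρ ≠ 0) (heig : (U * U) *ᵥ ν = ρ • ν) (x : n → K) :
    U *ᵥ x = (ν ⬝ᵥ x) • U *ᵥ ν - (U *ᵥ ν ⬝ᵥ x) • ν := by
  have hνw := dotProduct_mulVec_self_eq_zero_of_transpose_eq_neg_s15 hU ν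
  have hρw := eq_neg_dotProduct_self_of_mul_self_mulVec_eq_smul hU hνν heig
  have hww := mulVec_dotProduct_mulVec_self_ne_zero hU hνν hρ heig
  have hmem : U *ᵥ x ∈ Submodule.span K {ν, U *ᵥ ν} := by
    rw [← range_mulVecLin_eq_span_pair hU hrank hνν hρ heig]
    exact ⟨x, rfl⟩
  obtain ⟨a, b, hab⟩ := Submodule.mem_span_pair.mp hmem
  have ha : a = -(U *ᵥ ν ⬝ᵥ x) := by
    rw [← dotProduct_left_smul_add_smul hνν hνw a b, hab,
      dotProduct_mulVec_eq_neg_of_transpose_eq_neg hU]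
  have hb : b = ν ⬝ᵥ x := by
    refine mul_right_cancel₀ hww ?_
    rw [← dotProduct_right_smul_add_smul hνw a b, hab,
      dotProduct_mulVec_eq_neg_of_transpose_eq_neg hU, mulVec_mulVec, heig, smul_dotProduct,
      smul_eq_mul, hρw]
    ring
  rw [← hab, ha, hb, neg_smul, add_comm, ← sub_eq_add_neg]

theorem eq_vecMulVec_sub_vecMulVec_of_rank_eq_two (hU : Uᵀ = -U) (hrank : U.rank = 2)
    (hνν : ν ⬝ᵥ ν = 1) (hρ : ρ ≠ 0) (heig : (U * U) *ᵥ ν = ρ • ν) :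
    U = vecMulVec (U *ᵥ ν) ν - vecMulVec ν (U *ᵥ ν) := by
  refine ext_iff_mulVec.mpr fun x ↦ ?_
  rw [sub_mulVec, vecMulVec_mulVec, vecMulVec_mulVec, op_smul_eq_smul, op_smul_eq_smul,
    mulVec_eq_of_rank_eq_two hU hrank hνν hρ heig]

end Matrix

theorem stmt_15_general {m : ℕ} (U : Matrix (Fin m) (Fin m) ℝ)
    (hskew : U = -Uᵀ) (hrank : U.rank = 2) (ν : Fin m → ℝ) (hunit : ∑ i, ν i ^ 2 = 1)
    (ρ : ℝ) (hρ : ρ ≠ 0) (heig : (U * U).mulVec ν = ρ • ν) :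
    U = Matrix.vecMulVec (U.mulVec ν) ν - Matrix.vecMulVec ν (U.mulVec ν) := by
  have hU : Uᵀ = -U := neg_eq_iff_eq_neg.mp hskew.symm
  have hνν : ν ⬝ᵥ ν = 1 := by simpa [dotProduct, sq] using hunit
  exact eq_vecMulVec_sub_vecMulVec_of_rank_eq_two hU hrank hνν hρ heig

/-- Proposition A.2 (forward direction): if `U` is a real skew-symmetric `m×m` matrix of
rank `2` (`m ≥ 2`), and `ν` is a unit vector with `U² ν = ρ ν` for some nonzero `ρ`, then
`U = (U ν) νᵀ − ν (U ν)ᵀ`. -/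
theorem stmt_15 {m : ℕ} (hm : 2 ≤ m) (U : Matrix (Fin m) (Fin m) ℝ)
    (hskew : U = -Uᵀ) (hrank : U.rank = 2) (ν : Fin m → ℝ) (hunit : ∑ i, ν i ^ 2 = 1)
    (ρ : ℝ) (hρ : ρ ≠ 0) (heig : (U * U).mulVec ν = ρ • ν) :
    U = Matrix.vecMulVec (U.mulVec ν) ν - Matrix.vecMulVec ν (U.mulVec ν) :=
  stmt_15_general U hskew hrank ν hunit ρ hρ heig
end

section
/- Let h be a skew-symmetric real m×m matrix (m ≥ 2), i.e., h + hᵀ = 0, and let ν ∈ ℝ^m be a unit column vector satisfying h − h ν νᵀ − ν νᵀ h = 0. Then the trace of h² satisfies Tr(h²) = −2 ‖h ν‖². -/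
open Matrix

/-
From `h = h P + P h` with `P = ν νᵀ`, cyclicity of the trace gives `Tr(h²) = 2 Tr(h² P)`, and
`Tr(h² P) = νᵀ h² ν = -(h ν)ᵀ (h ν)` because `hᵀ = -h`.
-/

namespace Matrix

variable {n R : Type*} [Fintype n] [CommRing R]

theorem trace_mul_self_eq_two_mul_of_eq_mul_add_mul {A P : Matrix n n R}
    (hA : A = A * P + P * A) : trace (A * A) = 2 * trace (A * A * P) := by
  calc trace (A * A) = trace (A * (A * P + P * A)) := by rw [← hA]
    _ = trace (A * A * P) + trace (A * P * A) := by
      rw [Matrix.mul_add, trace_add, ← Matrix.mul_assoc, ← Matrix.mul_assoc]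
    _ = 2 * trace (A * A * P) := by rw [trace_mul_cycle A P A]; ring

theorem trace_mul_self_mul_vecMulVec_of_transpose_eq_neg {A : Matrix n n R} (hA : Aᵀ = -A)
    (v : n → R) : trace (A * A * vecMulVec v v) = -((A *ᵥ v) ⬝ᵥ (A *ᵥ v)) := by
  rw [mul_vecMulVec, trace_vecMulVec, ← mulVec_mulVec, dotProduct_comm, dotProduct_mulVec,
    ← mulVec_transpose, hA, neg_mulVec, neg_dotProduct]

end Matrix

theorem stmt_19_general {m : ℕ} (h : Matrix (Fin m) (Fin m) ℝ)
    (hskew : h + hᵀ = 0) (ν : Fin m → ℝ)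
    (heq : h - h * Matrix.vecMulVec ν ν - Matrix.vecMulVec ν ν * h = 0) :
    (h * h).trace = -2 * ∑ i, (h.mulVec ν i) ^ 2 := by
  have hT : hᵀ = -h := eq_neg_of_add_eq_zero_right hskew
  have hsplit : h = h * vecMulVec ν ν + vecMulVec ν ν * h := by
    rwa [sub_sub, sub_eq_zero] at heq
  rw [trace_mul_self_eq_two_mul_of_eq_mul_add_mul hsplit,
    trace_mul_self_mul_vecMulVec_of_transpose_eq_neg hT, dotProduct]
  simp only [sq]
  ring

/-- Equation (A13): if `h` is a skew-symmetric real `m×m` matrix (`m ≥ 2`) and `ν` a unit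
column vector with `h − h ν νᵀ − ν νᵀ h = 0`, then `Tr(h²) = −2 ‖h ν‖²`. -/
theorem stmt_19 {m : ℕ} (hm : 2 ≤ m) (h : Matrix (Fin m) (Fin m) ℝ)
    (hskew : h + hᵀ = 0) (ν : Fin m → ℝ) (hunit : ∑ i, ν i ^ 2 = 1)
    (heq : h - h * Matrix.vecMulVec ν ν - Matrix.vecMulVec ν ν * h = 0) :
    (h * h).trace = -2 * ∑ i, (h.mulVec ν i) ^ 2 :=
  stmt_19_general h hskew ν heq
end
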